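/- arXiv:1110.5887 — 8 statements merged into one kernel-verified Lean document; each statement's English description precedes it below -/
import Mathlib

section
/- For all x > 0, the modified Bessel function K_1 satisfies e^x K_1(x) ≤ 1 + 1/x. -/
open MeasureTheory Real

/-!
Since `√(1 + s²) ≥ max 1 s`, the integrand is at most `1` and at most `e^{-x(s-1)}`.
Splitting the range at `s = 1`, the first bound contributes `1` on `(0, 1]` and the second
`∫_1^∞ e^{-x(s-1)} ds = 1/x`.
-/

theorem le_sqrt_one_add_sq (s : ℝ) : s ≤ √(1 + s ^ 2) :=
  (le_abs_self s).trans (abs_le_sqrt (by linarith))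

theorem exp_neg_mul_sub_eq (x c : ℝ) :
    (fun s ↦ exp (-x * (s - c))) = fun s ↦ exp (x * c) * exp (-x * s) := by
  ext s
  rw [← exp_add]
  ring_nf

theorem integrableOn_exp_neg_mul_sub_Ioi {x : ℝ} (hx : 0 < x) (c a : ℝ) :
    IntegrableOn (fun s ↦ exp (-x * (s - c))) (Set.Ioi a) := by
  rw [exp_neg_mul_sub_eq]
  exact (exp_neg_integrableOn_Ioi a hx).const_mul _

theorem integral_exp_neg_mul_sub_Ioi {x : ℝ} (hx : 0 < x) (c : ℝ) :
    ∫ s in Set.Ioi c, exp (-x * (s - c)) = 1 / x := by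
  rw [exp_neg_mul_sub_eq, integral_const_mul, integral_exp_mul_Ioi (neg_lt_zero.2 hx),
    mul_div_assoc', mul_neg, ← exp_add]
  simp

theorem exp_neg_mul_sqrt_one_add_sq_sub_one_le_one {x : ℝ} (hx : 0 ≤ x) (s : ℝ) :
    exp (-x * (√(1 + s ^ 2) - 1)) ≤ 1 := by
  have : 1 ≤ √(1 + s ^ 2) := one_le_sqrt.2 (by nlinarith)
  exact exp_le_one_iff.2 (by nlinarith)

theorem exp_neg_mul_sqrt_one_add_sq_sub_one_le {x : ℝ} (hx : 0 ≤ x) (s : ℝ) :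
    exp (-x * (√(1 + s ^ 2) - 1)) ≤ exp (-x * (s - 1)) :=
  exp_le_exp.2 (by nlinarith [le_sqrt_one_add_sq s])

/-- For all `x > 0`, the modified Bessel function `K₁` satisfies `e^x K₁(x) ≤ 1 + 1/x`,
where `K₁` is given by the integral representation
`e^x K₁(x) = ∫_0^∞ e^{-x(√(1+s²)-1)} ds`. -/
theorem bessel_K1_upper (x : ℝ) (hx : 0 < x) :
    ∫ s in Set.Ioi (0 : ℝ), Real.exp (-x * (Real.sqrt (1 + s ^ 2) - 1)) ≤ 1 + 1 / x := by
  set f : ℝ → ℝ := fun s ↦ exp (-x * (√(1 + s ^ 2) - 1))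
  have hf_cont : Continuous f := by fun_prop
  have hf_tail : IntegrableOn f (Set.Ioi 1) :=
    (integrableOn_exp_neg_mul_sub_Ioi hx 1 1).mono' hf_cont.aestronglyMeasurable.restrict
      (.of_forall fun s ↦ by
        rw [norm_of_nonneg (exp_pos _).le]
        exact exp_neg_mul_sqrt_one_add_sq_sub_one_le hx.le s)
  have h_head : ∫ s in (0 : ℝ)..1, f s ≤ 1 := by
    simpa using intervalIntegral.integral_mono_on zero_le_one (hf_cont.intervalIntegrable 0 1)
      (intervalIntegrable_const (μ := volume))
      fun s _ ↦ exp_neg_mul_sqrt_one_add_sq_sub_one_le_one hx.le s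
  have h_tail : ∫ s in Set.Ioi (1 : ℝ), f s ≤ 1 / x := by
    rw [← integral_exp_neg_mul_sub_Ioi hx 1]
    exact setIntegral_mono hf_tail (integrableOn_exp_neg_mul_sub_Ioi hx 1 1)
      (exp_neg_mul_sqrt_one_add_sq_sub_one_le hx.le)
  rw [← intervalIntegral.integral_interval_add_Ioi' (hf_cont.intervalIntegrable 0 1) hf_tail]
  linarith
end

section
/- For every μ > 0, the integral (1/π) ∫_0^∞ (μ/(s² − μ²)) log((1/2) + (1/2)√((1+s²)/(1+μ²))) ds, taken as a principal value, is finite and nonnegative. -/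
/-!
The integrand is nonnegative, because both factors change sign at `s = μ`. Writing
`R = (1 + s²)/(1 + μ²)`, it equals `μ/(1 + μ²)` times the slope at `1` of `x ↦ log((1 + √x)/2)`,
and that slope lies in `[0, 1]`; for large `s` the integrand is `O(log s / s²)`. Hence it is
Lebesgue integrable on `(0, ∞)`, and the principal value is just the Lebesgue integral: by absolute
continuity, the integral over the excised interval of length `2ε` tends to `0`.
-/

open MeasureTheory Real Filter Set Topology

theorem MeasureTheory.IntegrableOn.tendsto_setIntegral_sdiff {α E ι : Type*} [MeasurableSpace α]
    [NormedAddCommGroup E] [NormedSpace ℝ E] {μ : Measure α} {f : α → E} {s : Set α}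
    {t : ι → Set α} {l : Filter ι} (hf : IntegrableOn f s μ) (ht : ∀ i, MeasurableSet (t i))
    (hμt : Tendsto (μ ∘ t) l (𝓝 0)) :
    Tendsto (fun i ↦ ∫ x in s \ t i, f x ∂μ) l (𝓝 (∫ x in s, f x ∂μ)) := by
  have hμst : Tendsto (μ.restrict s ∘ t) l (𝓝 0) :=
    tendsto_of_tendsto_of_tendsto_of_le_of_le tendsto_const_nhds hμt (fun _ ↦ zero_le)
      fun i ↦ Measure.restrict_apply_le s (t i)
  have hsmall := hf.tendsto_setIntegral_nhds_zero hμst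
  rw [← sub_zero (∫ x in s, f x ∂μ)]
  refine (tendsto_const_nhds.sub hsmall).congr fun i ↦ ?_
  rw [Measure.restrict_restrict (ht i), ← integral_inter_add_sdiff (ht i) hf, inter_comm,
    add_sub_cancel_left]

theorem tendsto_volume_Ioo_sub_add_nhds_zero (a : ℝ) :
    Tendsto (fun ε : ℝ ↦ volume (Ioo (a - ε) (a + ε))) (𝓝 0) (𝓝 0) := by
  simp only [Real.volume_Ioo, add_sub_sub_cancel]
  have hlen : Tendsto (fun ε : ℝ ↦ ε + ε) (𝓝 0) (𝓝 (0 + 0)) := tendsto_id.add tendsto_id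
  simpa using ENNReal.tendsto_ofReal hlen

noncomputable def logMeanSqrtSlope (x : ℝ) : ℝ :=
  log (1 / 2 + 1 / 2 * √x) / (x - 1)

theorem sq_sub_one_le_log_half_add_half {y : ℝ} (hy₀ : 0 ≤ y) (hy₁ : y ≤ 1) :
    y ^ 2 - 1 ≤ log (1 / 2 + 1 / 2 * y) := by
  have hpos : 0 < 1 / 2 + 1 / 2 * y := by positivity
  have hinv : (1 / 2 + 1 / 2 * y)⁻¹ ≤ 2 - y ^ 2 := by
    rw [inv_le_iff_one_le_mul₀ hpos]
    nlinarith [mul_nonneg (mul_nonneg hy₀ (sub_nonneg.2 hy₁)) (by linarith : (0 : ℝ) ≤ 2 + y)]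
  linarith [one_sub_inv_le_log_of_pos hpos]

theorem log_half_add_half_le_sq_sub_one {y : ℝ} (hy : 1 ≤ y) :
    log (1 / 2 + 1 / 2 * y) ≤ y ^ 2 - 1 := by
  nlinarith [log_le_sub_one_of_pos (by positivity : (0 : ℝ) < 1 / 2 + 1 / 2 * y)]

theorem logMeanSqrtSlope_nonneg (x : ℝ) : 0 ≤ logMeanSqrtSlope x := by
  rcases le_total x 1 with h | h
  · refine div_nonneg_of_nonpos (log_nonpos (by positivity) ?_) (by linarith)
    linarith [sqrt_le_one.2 h]
  · refine div_nonneg (log_nonneg ?_) (by linarith)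
    linarith [one_le_sqrt.2 h]

theorem logMeanSqrtSlope_le_one {x : ℝ} (hx : 0 ≤ x) : logMeanSqrtSlope x ≤ 1 := by
  rcases lt_trichotomy x 1 with h | rfl | h
  · refine (div_le_one_of_neg (by linarith)).2 ?_
    simpa [sq_sqrt hx] using sq_sub_one_le_log_half_add_half (sqrt_nonneg x) (sqrt_le_one.2 h.le)
  · simp [logMeanSqrtSlope]
  · refine (div_le_one (by linarith)).2 ?_
    simpa [sq_sqrt hx] using log_half_add_half_le_sq_sub_one (one_le_sqrt.2 h.le)

noncomputable def phaseShiftIntegrand (μ s : ℝ) : ℝ :=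
  μ / (s ^ 2 - μ ^ 2) * log (1 / 2 + 1 / 2 * √((1 + s ^ 2) / (1 + μ ^ 2)))

theorem phaseShiftIntegrand_eq (μ s : ℝ) :
    phaseShiftIntegrand μ s =
      μ / (1 + μ ^ 2) * logMeanSqrtSlope ((1 + s ^ 2) / (1 + μ ^ 2)) := by
  have hμ : 1 + μ ^ 2 ≠ 0 := by positivity
  rw [phaseShiftIntegrand, logMeanSqrtSlope,
    show (1 + s ^ 2) / (1 + μ ^ 2) - 1 = (s ^ 2 - μ ^ 2) / (1 + μ ^ 2) by field_simp; ring,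
    div_div_eq_mul_div]
  field_simp

theorem phaseShiftIntegrand_nonneg {μ : ℝ} (hμ : 0 ≤ μ) (s : ℝ) :
    0 ≤ phaseShiftIntegrand μ s := by
  rw [phaseShiftIntegrand_eq]
  exact mul_nonneg (by positivity) (logMeanSqrtSlope_nonneg _)

theorem phaseShiftIntegrand_le {μ : ℝ} (hμ : 0 ≤ μ) (s : ℝ) :
    phaseShiftIntegrand μ s ≤ μ / (1 + μ ^ 2) := by
  rw [phaseShiftIntegrand_eq]
  exact mul_le_of_le_one_right (by positivity) (logMeanSqrtSlope_le_one (by positivity))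

theorem log_one_add_le_two_mul_sqrt {s : ℝ} (hs : 0 ≤ s) : log (1 + s) ≤ 2 * √s := by
  rw [log_le_iff_le_exp (by positivity)]
  calc 1 + s ≤ 1 + 2 * √s + (2 * √s) ^ 2 / 2 := by nlinarith [sq_sqrt hs, sqrt_nonneg s]
    _ ≤ exp (2 * √s) := quadratic_le_exp_of_nonneg (by positivity)

theorem phaseShiftIntegrand_le_rpow {μ s : ℝ} (hμ : 0 ≤ μ) (hs : 2 * μ < s) :
    phaseShiftIntegrand μ s ≤ 8 * μ / 3 * s ^ (-(3 / 2) : ℝ) := by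
  have hs₀ : 0 < s := by linarith
  have hR : √((1 + s ^ 2) / (1 + μ ^ 2)) ≤ 1 + s := by
    rw [sqrt_le_left (by positivity)]
    calc (1 + s ^ 2) / (1 + μ ^ 2) ≤ 1 + s ^ 2 := div_le_self (by positivity) (by nlinarith)
      _ ≤ (1 + s) ^ 2 := by nlinarith
  have hlog : log (1 / 2 + 1 / 2 * √((1 + s ^ 2) / (1 + μ ^ 2))) ≤ 2 * √s :=
    (log_le_log (by positivity) (by linarith)).trans (log_one_add_le_two_mul_sqrt hs₀.le)
  have hrpow : √s / s ^ 2 = s ^ (-(3 / 2) : ℝ) := by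
    rw [sqrt_eq_rpow, ← rpow_natCast, ← rpow_sub hs₀]
    norm_num
  calc phaseShiftIntegrand μ s
      = μ * log (1 / 2 + 1 / 2 * √((1 + s ^ 2) / (1 + μ ^ 2))) / (s ^ 2 - μ ^ 2) :=
        div_mul_eq_mul_div _ _ _
    _ ≤ μ * (2 * √s) / (3 / 4 * s ^ 2) :=
        div_le_div₀ (by positivity) (mul_le_mul_of_nonneg_left hlog hμ) (by positivity)
          (by nlinarith)
    _ = 8 * μ / 3 * s ^ (-(3 / 2) : ℝ) := by
        rw [← hrpow]
        field_simp
        ring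

theorem measurable_phaseShiftIntegrand (μ : ℝ) : Measurable (phaseShiftIntegrand μ) := by
  unfold phaseShiftIntegrand
  fun_prop

theorem integrableOn_phaseShiftIntegrand {μ : ℝ} (hμ : 0 < μ) :
    IntegrableOn (phaseShiftIntegrand μ) (Ioi 0) := by
  have hmeas := measurable_phaseShiftIntegrand μ
  have hnorm : ∀ s, ‖phaseShiftIntegrand μ s‖ = phaseShiftIntegrand μ s := fun s ↦
    norm_of_nonneg (phaseShiftIntegrand_nonneg hμ.le s)
  have hnear : IntegrableOn (phaseShiftIntegrand μ) (Ioc 0 (2 * μ)) :=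
    Measure.integrableOn_of_bounded measure_Ioc_lt_top.ne hmeas.aestronglyMeasurable
      (ae_of_all _ fun s ↦ (hnorm s).trans_le (phaseShiftIntegrand_le hμ.le s))
  have hfar : IntegrableOn (phaseShiftIntegrand μ) (Ioi (2 * μ)) := by
    have hrpow : IntegrableOn (fun s : ℝ ↦ s ^ (-(3 / 2) : ℝ)) (Ioi (2 * μ)) :=
      integrableOn_Ioi_rpow_of_lt (by norm_num) (by positivity)
    refine (hrpow.const_mul (8 * μ / 3)).mono' hmeas.aestronglyMeasurable ?_
    filter_upwards [ae_restrict_mem measurableSet_Ioi] with s hs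
    exact (hnorm s).trans_le (phaseShiftIntegrand_le_rpow hμ.le hs)
  simpa [Ioc_union_Ioi_eq_Ioi (by positivity : (0 : ℝ) ≤ 2 * μ)] using hnear.union hfar

/-- For every `μ > 0`, the integral
`(1/π) ∫_0^∞ (μ/(s² − μ²)) log((1/2) + (1/2)√((1+s²)/(1+μ²))) ds`,
taken as a principal value (excising a symmetric interval around the singularity at `s = μ`),
is finite and nonnegative. -/
theorem phase_shift_pv_finite_nonneg (μ : ℝ) (hμ : 0 < μ) :
    ∃ L : ℝ, 0 ≤ L ∧
      Tendsto (fun ε : ℝ =>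
          (1 / Real.pi) * ∫ s in Set.Ioi (0 : ℝ) \ Set.Ioo (μ - ε) (μ + ε),
            (μ / (s ^ 2 - μ ^ 2)) *
              Real.log (1 / 2 + (1 / 2) * Real.sqrt ((1 + s ^ 2) / (1 + μ ^ 2))))
        (nhdsWithin 0 (Set.Ioi 0)) (nhds L) := by
  have hpv := (integrableOn_phaseShiftIntegrand hμ).tendsto_setIntegral_sdiff
    (t := fun ε ↦ Ioo (μ - ε) (μ + ε)) (fun _ ↦ measurableSet_Ioo)
    (tendsto_volume_Ioo_sub_add_nhds_zero μ)
  have hnonneg : 0 ≤ ∫ s in Ioi 0, phaseShiftIntegrand μ s :=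
    setIntegral_nonneg measurableSet_Ioi fun s _ ↦ phaseShiftIntegrand_nonneg hμ.le s
  exact ⟨_, mul_nonneg (by positivity) hnonneg, (hpv.mono_left nhdsWithin_le_nhds).const_mul _⟩
end

section
/- For all μ > 0, the derivative of ϑ_μ with respect to μ equals (1/(π μ (1+μ²))) log((1 + μ + √(1+μ²))/(1 − μ + √(1+μ²))), using the representation dϑ_μ/dμ = (1/(π(1+μ²))) ∫_0^∞ dr/(√(1+r²)(√(1+μ²)+√(1+r²))). -/
open MeasureTheory Real Filter Topology Set

/-!
With `r = sinh t` the integral becomes `∫₀^∞ dt / (a + cosh t)`, `a = √(1 + μ²)`, whose classical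
antiderivative is `(2/μ) artanh (k tanh (t/2))` with `k = μ / (a + 1)`. Since
`tanh (arsinh r / 2) = r / (1 + √(1 + r²))`, in the original variable this is
`F r = (1/μ) (log (1 + k τ r) - log (1 - k τ r))` with `τ r = r / (1 + √(1 + r²))`.
The integrand is positive, hence integrable with improper integral `lim_{∞} F - F 0`, and
`τ r → 1` gives `(1/μ) log ((1 + k) / (1 - k)) = (1/μ) log ((a + 1 + μ) / (a + 1 - μ))`.
-/

lemma abs_lt_sqrt_one_add_sq (x : ℝ) : |x| < √(1 + x ^ 2) :=
  (Real.lt_sqrt (abs_nonneg x)).mpr (by rw [sq_abs]; linarith)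

noncomputable def tanhHalfArsinh (x : ℝ) : ℝ := x / (1 + √(1 + x ^ 2))

lemma abs_tanhHalfArsinh_lt_one (x : ℝ) : |tanhHalfArsinh x| < 1 := by
  have hs := abs_lt_sqrt_one_add_sq x
  have hpos : 0 < 1 + √(1 + x ^ 2) := by positivity
  rw [tanhHalfArsinh, abs_div, abs_of_pos hpos, div_lt_one hpos]
  linarith

lemma hasDerivAt_tanhHalfArsinh (x : ℝ) :
    HasDerivAt tanhHalfArsinh (1 / (√(1 + x ^ 2) * (1 + √(1 + x ^ 2)))) x := by
  have hs2 : √(1 + x ^ 2) ^ 2 = 1 + x ^ 2 := sq_sqrt (by positivity)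
  have hsqrt : HasDerivAt (fun y => √(1 + y ^ 2)) (x / √(1 + x ^ 2)) x := by
    refine (((hasDerivAt_pow 2 x).const_add 1).sqrt (by positivity)).congr_deriv ?_
    field_simp
    norm_num
  refine ((hasDerivAt_id' x).div (hsqrt.const_add 1) (by positivity)).congr_deriv ?_
  field_simp
  linear_combination hs2

lemma tendsto_tanhHalfArsinh_atTop : Tendsto tanhHalfArsinh atTop (𝓝 1) := by
  -- in the variable `u = x⁻¹` the function is `1 / (u + √(u² + 1))`, continuous at `u = 0`
  have hcont : Continuous fun u : ℝ => 1 / (u + √(u ^ 2 + 1)) :=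
    continuous_const.div (by fun_prop) fun u => by
      have := abs_lt_sqrt_one_add_sq u
      rw [add_comm (u ^ 2)]
      linarith [neg_abs_le u]
  have hlim := (hcont.tendsto 0).comp tendsto_inv_atTop_zero
  simp only [Function.comp_def, ne_eq, OfNat.ofNat_ne_zero, not_false_eq_true, zero_pow,
    zero_add, sqrt_one, div_one] at hlim
  refine hlim.congr' ?_
  filter_upwards [eventually_gt_atTop 0] with x hx
  have hsq : √(x⁻¹ ^ 2 + 1) = √(1 + x ^ 2) / x := by
    rw [show x⁻¹ ^ 2 + 1 = (1 + x ^ 2) / x ^ 2 by field_simp,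
      sqrt_div' _ (sq_nonneg x), sqrt_sq hx.le]
  rw [hsq, tanhHalfArsinh]
  field_simp

lemma hasDerivAt_log_one_add_sub_log_one_sub {f : ℝ → ℝ} {f' x : ℝ} (hf : HasDerivAt f f' x)
    (hfx : |f x| < 1) :
    HasDerivAt (fun y => log (1 + f y) - log (1 - f y)) (2 * f' / (1 - f x ^ 2)) x := by
  obtain ⟨hlo, hhi⟩ := abs_lt.mp hfx
  have hadd : 1 + f x ≠ 0 := by linarith
  have hsub : 1 - f x ≠ 0 := by linarith
  have hsq : 1 - f x ^ 2 ≠ 0 := by nlinarith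
  refine (HasDerivAt.sub (HasDerivAt.log (hf.const_add 1) hadd)
    (HasDerivAt.log (hf.const_sub 1) hsub)).congr_deriv ?_
  field_simp
  ring

lemma abs_div_sqrt_one_add_sq_add_one_lt_one (μ : ℝ) : |μ / (√(1 + μ ^ 2) + 1)| < 1 := by
  have hμ := abs_lt_sqrt_one_add_sq μ
  have hpos : 0 < √(1 + μ ^ 2) + 1 := by positivity
  rw [abs_div, abs_of_pos hpos, div_lt_one hpos]
  linarith

namespace PhaseShift

noncomputable def primitive (μ r : ℝ) : ℝ :=
  1 / μ * (log (1 + μ / (√(1 + μ ^ 2) + 1) * tanhHalfArsinh r)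
    - log (1 - μ / (√(1 + μ ^ 2) + 1) * tanhHalfArsinh r))

lemma primitive_zero (μ : ℝ) : primitive μ 0 = 0 := by
  simp [primitive, tanhHalfArsinh]

lemma hasDerivAt_primitive {μ : ℝ} (hμ : μ ≠ 0) (r : ℝ) :
    HasDerivAt (primitive μ) (1 / (√(1 + r ^ 2) * (√(1 + μ ^ 2) + √(1 + r ^ 2)))) r := by
  set a := √(1 + μ ^ 2)
  set k := μ / (a + 1)
  have ha2 : a ^ 2 = 1 + μ ^ 2 := sq_sqrt (by positivity)
  have hs2 : √(1 + r ^ 2) ^ 2 = 1 + r ^ 2 := sq_sqrt (by positivity)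
  have ha1 : 0 < a + 1 := by positivity
  have hkτ : |k * tanhHalfArsinh r| < 1 := by
    rw [abs_mul]
    exact mul_lt_one_of_nonneg_of_lt_one_left (abs_nonneg k)
      (abs_div_sqrt_one_add_sq_add_one_lt_one μ) (abs_tanhHalfArsinh_lt_one r).le
  have hden : 1 - (k * tanhHalfArsinh r) ^ 2
      = 2 * (a + √(1 + r ^ 2)) / ((a + 1) * (1 + √(1 + r ^ 2))) := by
    simp only [k, tanhHalfArsinh]
    field_simp
    linear_combination r ^ 2 * ha2 + (a ^ 2 - 1) * hs2
  refine ((hasDerivAt_log_one_add_sub_log_one_sub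
    ((hasDerivAt_tanhHalfArsinh r).const_mul k) hkτ).const_mul (1 / μ)).congr_deriv ?_
  rw [hden]
  simp only [k]
  field_simp

lemma tendsto_primitive_atTop (μ : ℝ) :
    Tendsto (primitive μ) atTop
      (𝓝 (1 / μ * log ((1 + μ + √(1 + μ ^ 2)) / (1 - μ + √(1 + μ ^ 2))))) := by
  set a := √(1 + μ ^ 2)
  set k := μ / (a + 1)
  obtain ⟨hlo, hhi⟩ := abs_lt.mp (abs_div_sqrt_one_add_sq_add_one_lt_one μ)
  have ha1 : 0 < a + 1 := by positivity
  have hvalue : log ((1 + μ + a) / (1 - μ + a)) = log (1 + k * 1) - log (1 - k * 1) := by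
    rw [← log_div (by linarith) (by linarith)]
    congr 1
    simp only [k]
    field_simp
    ring
  have hτ := tendsto_tanhHalfArsinh_atTop.const_mul k
  rw [hvalue]
  exact (((hτ.const_add 1).log (by linarith)).sub ((hτ.const_sub 1).log (by linarith))).const_mul _

end PhaseShift

theorem integral_Ioi_one_div_sqrt_one_add_sq_mul {μ : ℝ} (hμ : μ ≠ 0) :
    ∫ r in Ioi (0 : ℝ), 1 / (√(1 + r ^ 2) * (√(1 + μ ^ 2) + √(1 + r ^ 2)))
      = 1 / μ * log ((1 + μ + √(1 + μ ^ 2)) / (1 - μ + √(1 + μ ^ 2))) := by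
  rw [integral_Ioi_of_hasDerivAt_of_nonneg' (fun r _ => PhaseShift.hasDerivAt_primitive hμ r)
    (fun r _ => by positivity) (PhaseShift.tendsto_primitive_atTop μ),
    PhaseShift.primitive_zero, sub_zero]

/-- Closed-form evaluation of the integral representation of `dϑ_μ/dμ`: for all `μ > 0`,
`(1/(π(1+μ²))) ∫_0^∞ dr/(√(1+r²)(√(1+μ²)+√(1+r²)))
  = (1/(π μ (1+μ²))) log((1+μ+√(1+μ²))/(1−μ+√(1+μ²)))`. -/
theorem dtheta_closed_form (μ : ℝ) (hμ : 0 < μ) :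
    (1 / (Real.pi * (1 + μ ^ 2))) *
        ∫ r in Set.Ioi (0 : ℝ),
          1 / (Real.sqrt (1 + r ^ 2) * (Real.sqrt (1 + μ ^ 2) + Real.sqrt (1 + r ^ 2)))
      = (1 / (Real.pi * μ * (1 + μ ^ 2))) *
          Real.log ((1 + μ + Real.sqrt (1 + μ ^ 2)) / (1 - μ + Real.sqrt (1 + μ ^ 2))) := by
  rw [integral_Ioi_one_div_sqrt_one_add_sq_mul hμ.ne']
  field_simp
end

section
/- For all μ > 0, 0 < (1/(π μ (1+μ²))) log((1+μ+√(1+μ²))/(1−μ+√(1+μ²))) < (2/π)·1/(1+μ²). -/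
open Real

/-- For all `μ > 0`,
`0 < (1/(π μ (1+μ²))) log((1+μ+√(1+μ²))/(1−μ+√(1+μ²))) < (2/π) · 1/(1+μ²)`. -/
theorem dtheta_bounds (μ : ℝ) (hμ : 0 < μ) :
    0 < (1 / (Real.pi * μ * (1 + μ ^ 2))) *
        Real.log ((1 + μ + Real.sqrt (1 + μ ^ 2)) / (1 - μ + Real.sqrt (1 + μ ^ 2))) ∧
    (1 / (Real.pi * μ * (1 + μ ^ 2))) *
        Real.log ((1 + μ + Real.sqrt (1 + μ ^ 2)) / (1 - μ + Real.sqrt (1 + μ ^ 2)))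
      < (2 / Real.pi) * (1 / (1 + μ ^ 2)) := by
  have hπ := Real.pi_pos
  set s := Real.sqrt (1 + μ ^ 2) with hs
  have hs2 : s ^ 2 = 1 + μ ^ 2 := Real.sq_sqrt (by positivity)
  have hs0 : 0 ≤ s := Real.sqrt_nonneg _
  have hsμ : μ < s := by nlinarith
  have hd0 : (0:ℝ) < 1 - μ + s := by linarith
  have hd1 : (1:ℝ) ≤ 1 - μ + s := by linarith
  have hr1 : 1 < (1 + μ + s) / (1 - μ + s) := (one_lt_div hd0).mpr (by linarith)
  have hlogpos : 0 < Real.log ((1 + μ + s) / (1 - μ + s)) := Real.log_pos hr1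
  have hlt : Real.log ((1 + μ + s) / (1 - μ + s)) < 2 * μ := by
    calc Real.log ((1 + μ + s) / (1 - μ + s))
        < (1 + μ + s) / (1 - μ + s) - 1 :=
          Real.log_lt_sub_one_of_pos (by linarith) (ne_of_gt hr1)
      _ = 2 * μ / (1 - μ + s) := by field_simp; ring
      _ ≤ 2 * μ := div_le_self (by linarith) hd1
  constructor
  · exact mul_pos (by positivity) hlogpos
  · have heq : (2 / Real.pi) * (1 / (1 + μ ^ 2))
        = (1 / (Real.pi * μ * (1 + μ ^ 2))) * (2 * μ) := by
      field_simp
    rw [heq]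
    exact mul_lt_mul_of_pos_left hlt (by positivity)
end

section
/- For all μ > 0, (1/μ)(cos ϑ_μ − √((1 + √(1+μ²))/(2√(1+μ²)))) ≤ μ/8, where ϑ_μ ∈ [0, π/8]. -/
open Real

/-- For all `μ > 0` and any `ϑ_μ ∈ [0, π/8]`,
`(1/μ)(cos ϑ_μ − √((1 + √(1+μ²))/(2√(1+μ²)))) ≤ μ/8`. -/
theorem G_integral_upper (μ θ : ℝ) (hμ : 0 < μ) (hθ : θ ∈ Set.Icc (0 : ℝ) (Real.pi / 8)) :
    (1 / μ) * (Real.cos θ -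
        Real.sqrt ((1 + Real.sqrt (1 + μ ^ 2)) / (2 * Real.sqrt (1 + μ ^ 2))))
      ≤ μ / 8 := by
  set u := Real.sqrt (1 + μ ^ 2) with hu_def
  have hu2 : u ^ 2 = 1 + μ ^ 2 := Real.sq_sqrt (by positivity)
  have hu1 : 1 ≤ u := by
    nlinarith [Real.sqrt_nonneg (1 + μ ^ 2)]
  have hcos : Real.cos θ ≤ 1 := Real.cos_le_one θ
  have hkey : 1 - μ ^ 2 / 8 ≤ Real.sqrt ((1 + u) / (2 * u)) := by
    rcases le_or_gt (1 - μ ^ 2 / 8) 0 with h | h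
    · exact h.trans (Real.sqrt_nonneg _)
    · rw [Real.le_sqrt (by linarith)]
      rw [le_div_iff₀ (by linarith)]
      have hu3 : u < 3 := by nlinarith
      have hμ2 : μ ^ 2 = u ^ 2 - 1 := by linarith
      rw [hμ2]
      have hg : 0 ≤ 32 + 15 * u - 2 * u ^ 2 - u ^ 3 := by
        nlinarith [mul_nonneg (by linarith : (0:ℝ) ≤ 3 - u) (by linarith : (0:ℝ) ≤ u - 1), sq_nonneg (3 - u)]
      nlinarith [mul_nonneg (sq_nonneg (u - 1)) hg]
      positivity
  have h1 : Real.cos θ - Real.sqrt ((1 + u) / (2 * u)) ≤ μ ^ 2 / 8 := by linarith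
  calc (1 / μ) * (Real.cos θ - Real.sqrt ((1 + u) / (2 * u)))
      ≤ (1 / μ) * (μ ^ 2 / 8) := by
        apply mul_le_mul_of_nonneg_left h1 (by positivity)
    _ = μ / 8 := by field_simp
end

section
/- For all μ > 0, min(cos(π/8) + 2 sin(π/8)/(πμ), 1) − √((1+√(1+μ²))/(2√(1+μ²))) ≤ 0.217/μ · μ = 0.217, i.e. the function μ ↦ min(cos(π/8) + 2sin(π/8)/(πμ), 1) − √((1+√(1+μ²))/(2√(1+μ²))) is bounded above by cos(π/8) − 1/√2 < 0.217. -/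
open Real

/-!
Write `s = √(1 + μ²) ≥ 1`. Since `(1 + s) / (2s)` lies in `[1/2, 1]`, the chord of `√` over that
interval gives `√((1 + s) / (2s)) ≥ 1/√2 + 1/((2 + √2)s)`, so it suffices to bound the minimum by
`cos(π/8) + 1/((2 + √2)s)`. For `μ ≤ 2` the entry `1` does it, as `1 - cos(π/8) < 1/8`; for
`μ ≥ 2`, `sin x ≤ x` bounds the correction term by `1/(4μ)`, and `s ≤ 9μ/8`.
-/

lemma sub_le_sqrt_sub_sqrt_mul_add_sqrt {a x b : ℝ} (ha : 0 ≤ a) (hax : a ≤ x) (hxb : x ≤ b) :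
    x - a ≤ (√x - √a) * (√a + √b) := by
  have hsx : √x ^ 2 = x := sq_sqrt (ha.trans hax)
  have hsa : √a ^ 2 = a := sq_sqrt ha
  have hxa : √a ≤ √x := sqrt_le_sqrt hax
  have hbx : √x ≤ √b := sqrt_le_sqrt hxb
  nlinarith

lemma inv_sqrt_two_add_le_sqrt {s : ℝ} (hs : 1 ≤ s) :
    1 / √2 + 1 / ((2 + √2) * s) ≤ √((1 + s) / (2 * s)) := by
  have hs0 : 0 < s := by linarith
  have chord := sub_le_sqrt_sub_sqrt_mul_add_sqrt (a := 1 / 2) (x := (1 + s) / (2 * s)) (b := 1)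
    (by norm_num) (by rw [le_div_iff₀ (by positivity)]; linarith)
    (by rw [div_le_one (by positivity)]; linarith)
  rw [sqrt_div' _ zero_le_two, sqrt_one, ← div_le_iff₀ (by positivity)] at chord
  have hgap : ((1 + s) / (2 * s) - 1 / 2) / (1 / √2 + 1) = 1 / ((2 + √2) * s) := by
    have : √2 ≠ 0 := by positivity
    field_simp
    linear_combination (sq_sqrt zero_le_two : √2 ^ 2 = 2)
  linarith

lemma sqrt_two_lt : √2 < 1.41422 := by
  rw [sqrt_lt' (by norm_num)]; norm_num

lemma lt_sqrt_two : 1.4 < √2 := by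
  rw [lt_sqrt (by norm_num)]; norm_num

lemma cos_pi_div_eight_lt : cos (π / 8) < 0.92389 := by
  have := sqrt_two_lt
  rw [cos_pi_div_eight, div_lt_iff₀ two_pos, sqrt_lt' (by norm_num)]
  norm_num; linarith

lemma lt_cos_pi_div_eight : 0.92 < cos (π / 8) := by
  have := lt_sqrt_two
  rw [cos_pi_div_eight, lt_div_iff₀ two_pos, lt_sqrt (by norm_num)]
  norm_num; linarith

lemma two_mul_sin_pi_div_eight_div_le {μ : ℝ} (hμ : 0 < μ) :
    2 * sin (π / 8) / (π * μ) ≤ 1 / (4 * μ) := by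
  have := sin_le (by positivity : 0 ≤ π / 8)
  rw [div_le_div_iff₀ (by positivity) (by positivity)]
  nlinarith [pi_pos]

/-- The function
`μ ↦ min(cos(π/8) + 2 sin(π/8)/(πμ), 1) − √((1+√(1+μ²))/(2√(1+μ²)))`
is bounded above by `cos(π/8) − 1/√2`, and `cos(π/8) − 1/√2 < 0.217`. -/
theorem G_integral_key_bound :
    (∀ μ : ℝ, 0 < μ →
      min (Real.cos (Real.pi / 8) + 2 * Real.sin (Real.pi / 8) / (Real.pi * μ)) 1 -
          Real.sqrt ((1 + Real.sqrt (1 + μ ^ 2)) / (2 * Real.sqrt (1 + μ ^ 2)))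
        ≤ Real.cos (Real.pi / 8) - 1 / Real.sqrt 2) ∧
    Real.cos (Real.pi / 8) - 1 / Real.sqrt 2 < 0.217 := by
  refine ⟨fun μ hμ => ?_, ?_⟩
  swap
  · have : 1 / 1.41422 < 1 / √2 := one_div_lt_one_div_of_lt (by positivity) sqrt_two_lt
    linarith [cos_pi_div_eight_lt]
  set s := √(1 + μ ^ 2)
  have hs : 1 ≤ s := one_le_sqrt.mpr (by nlinarith)
  have hs_sq : s ^ 2 = 1 + μ ^ 2 := sq_sqrt (by positivity)
  suffices min (cos (π / 8) + 2 * sin (π / 8) / (π * μ)) 1 ≤ cos (π / 8) + 1 / ((2 + √2) * s) by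
    linarith [inv_sqrt_two_add_le_sqrt hs]
  rcases le_total μ 2 with hμ2 | hμ2
  · have hs_le : s ≤ 9 / 4 := by nlinarith
    have : 1 / 8 ≤ 1 / ((2 + √2) * s) :=
      one_div_le_one_div_of_le (by positivity) (by nlinarith [sqrt_two_lt])
    linarith [min_le_right (cos (π / 8) + 2 * sin (π / 8) / (π * μ)) 1, lt_cos_pi_div_eight]
  · have hs_le : s ≤ 9 / 8 * μ := by nlinarith
    have : 1 / (4 * μ) ≤ 1 / ((2 + √2) * s) :=
      one_div_le_one_div_of_le (by positivity) (by nlinarith [sqrt_two_lt])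
    linarith [min_le_left (cos (π / 8) + 2 * sin (π / 8) / (π * μ)) 1,
      two_mul_sin_pi_div_eight_div_le hμ]
end

section
/- For all x ≥ 0, (1 + x + x²/2) e^{-x} ≤ 2(√3 − 1) e^{-(√3−1)/2} (1 + x/2) e^{-x/2}, and hence (1 + x + x²/2) e^{-x} < 1.016 (1 + x/2) e^{-x/2}. -/
/-!
Write the left side as `F x * (1 + x/2) e^{-x/2}` with
`F x = (1 + x + x²/2) / (1 + x/2) * e^{-x/2}`. A direct computation gives
`F' x = x (√3 - 1 - x)(x + 1 + √3) / (2 (2 + x)²) * e^{-x/2}`, so on `x ≥ 0` the function `F`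
peaks at `√3 - 1`, a root of `x² + 2x - 2`; there `1 + x + x²/2 = 2`, and the peak value is
`2(√3 - 1)e^{-(√3-1)/2}`. The numerical bound `1.016` follows from the cubic Taylor lower bound
for `exp` at `(√3 - 1)/2` together with `√3 < 1.7321`.
-/

open Real Set

noncomputable def tailRatio (x : ℝ) : ℝ := (1 + x + x ^ 2 / 2) / (1 + x / 2) * exp (-x / 2)

lemma hasDerivAt_tailRatio {x : ℝ} (hx : 1 + x / 2 ≠ 0) :
    HasDerivAt tailRatio
      (x * (√3 - 1 - x) * (x + 1 + √3) / (2 * (2 + x) ^ 2) * exp (-x / 2)) x := by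
  have hp : HasDerivAt (fun x : ℝ => 1 + x + x ^ 2 / 2) (1 + x) x :=
    (((hasDerivAt_id' x).const_add 1).add ((hasDerivAt_pow 2 x).div_const 2)).congr_deriv
      (by ring)
  have hq : HasDerivAt (fun x : ℝ => 1 + x / 2) (1 / 2) x :=
    ((hasDerivAt_id' x).div_const 2).const_add 1
  have he : HasDerivAt (fun x : ℝ => exp (-x / 2)) (exp (-x / 2) * (-1 / 2)) x :=
    ((hasDerivAt_id' x).neg.div_const 2).exp
  refine ((hp.div hq hx).mul he).congr_deriv ?_
  have h2 : 2 + x ≠ 0 := by contrapose! hx; linarith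
  have hs : (√3) ^ 2 = 3 := sq_sqrt (by norm_num)
  simp only [Pi.div_apply]
  field_simp
  linear_combination (-x) * hs

lemma continuousOn_tailRatio : ContinuousOn tailRatio (Ici 0) := fun x hx =>
  have : 0 ≤ x := hx
  (hasDerivAt_tailRatio (by positivity)).continuousAt.continuousWithinAt

lemma one_lt_sqrt_three : 1 < √3 := by
  rw [lt_sqrt zero_le_one]; norm_num

lemma sqrt_three_lt : √3 < 1.7321 := by
  rw [sqrt_lt' (by norm_num)]; norm_num

lemma monotoneOn_tailRatio : MonotoneOn tailRatio (Icc 0 (√3 - 1)) := by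
  refine monotoneOn_of_hasDerivWithinAt_nonneg (convex_Icc _ _)
    (continuousOn_tailRatio.mono Icc_subset_Ici_self)
    (fun x hx => (hasDerivAt_tailRatio ?_).hasDerivWithinAt) fun x hx => ?_ <;>
    rw [interior_Icc] at hx <;> obtain ⟨hx₀, hx₁⟩ := hx
  · positivity
  · have : 0 ≤ √3 - 1 - x := by linarith
    positivity

lemma antitoneOn_tailRatio : AntitoneOn tailRatio (Ici (√3 - 1)) := by
  have hr : 0 ≤ √3 - 1 := by linarith [one_lt_sqrt_three]
  refine antitoneOn_of_hasDerivWithinAt_nonpos (convex_Ici _)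
    (continuousOn_tailRatio.mono (Ici_subset_Ici.2 hr))
    (fun x hx => (hasDerivAt_tailRatio ?_).hasDerivWithinAt) fun x hx => ?_ <;>
    rw [interior_Ici] at hx <;> have hx₀ : 0 ≤ x := hr.trans (le_of_lt hx)
  · positivity
  · have hneg : √3 - 1 - x ≤ 0 := by linarith [mem_Ioi.1 hx]
    have hnum : x * (√3 - 1 - x) * (x + 1 + √3) ≤ 0 :=
      mul_nonpos_of_nonpos_of_nonneg (mul_nonpos_of_nonneg_of_nonpos hx₀ hneg) (by positivity)
    exact mul_nonpos_of_nonpos_of_nonneg (div_nonpos_of_nonpos_of_nonneg hnum (by positivity))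
      (exp_pos _).le

lemma tailRatio_le_tailRatio_sqrt_three_sub_one {x : ℝ} (hx : 0 ≤ x) :
    tailRatio x ≤ tailRatio (√3 - 1) := by
  have hr : 0 ≤ √3 - 1 := by linarith [one_lt_sqrt_three]
  rcases le_total x (√3 - 1) with h | h
  · exact monotoneOn_tailRatio ⟨hx, h⟩ ⟨hr, le_rfl⟩ h
  · exact antitoneOn_tailRatio self_mem_Ici h h

lemma tailRatio_sqrt_three_sub_one :
    tailRatio (√3 - 1) = 2 * (√3 - 1) * exp (-(√3 - 1) / 2) := by
  have hs : (√3) ^ 2 = 3 := sq_sqrt (by norm_num)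
  rw [tailRatio]
  congr 1
  have : 0 < 1 + (√3 - 1) / 2 := by linarith [sqrt_nonneg 3]
  rw [div_eq_iff this.ne']
  linear_combination (-1 / 2 : ℝ) * hs

lemma two_mul_sqrt_three_sub_one_mul_exp_lt :
    2 * (√3 - 1) * exp (-(√3 - 1) / 2) < 1.016 := by
  have ha : 0 ≤ (√3 - 1) / 2 := by linarith [one_lt_sqrt_three]
  have htaylor := sum_le_exp_of_nonneg ha 4
  simp only [Finset.sum_range_succ, Finset.sum_range_zero, Nat.factorial] at htaylor
  have hs : (√3) ^ 2 = 3 := sq_sqrt (by norm_num)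
  rw [neg_div, exp_neg, ← div_eq_mul_inv, div_lt_iff₀ (exp_pos _)]
  nlinarith [sqrt_three_lt]

lemma taylor_tail_eq_tailRatio_mul {x : ℝ} (hx : 1 + x / 2 ≠ 0) :
    (1 + x + x ^ 2 / 2) * exp (-x) = tailRatio x * ((1 + x / 2) * exp (-x / 2)) := by
  have h2 : 2 + x ≠ 0 := by contrapose! hx; linarith
  have he : exp (-x) = exp (-x / 2) * exp (-x / 2) := by rw [← exp_add]; ring_nf
  rw [tailRatio, he]
  field_simp

/-- For all `x ≥ 0`,
`(1 + x + x²/2)e^{-x} ≤ 2(√3 − 1)e^{-(√3−1)/2}(1 + x/2)e^{-x/2}`, and hence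
`(1 + x + x²/2)e^{-x} < 1.016 (1 + x/2)e^{-x/2}`. -/
theorem taylor_tail_second_order (x : ℝ) (hx : 0 ≤ x) :
    (1 + x + x ^ 2 / 2) * Real.exp (-x)
        ≤ 2 * (Real.sqrt 3 - 1) * Real.exp (-(Real.sqrt 3 - 1) / 2) *
          ((1 + x / 2) * Real.exp (-x / 2)) ∧
    (1 + x + x ^ 2 / 2) * Real.exp (-x) < 1.016 * ((1 + x / 2) * Real.exp (-x / 2)) := by
  have hpos : 0 < (1 + x / 2) * exp (-x / 2) := by positivity
  have hle : (1 + x + x ^ 2 / 2) * exp (-x)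
      ≤ 2 * (√3 - 1) * exp (-(√3 - 1) / 2) * ((1 + x / 2) * exp (-x / 2)) := by
    rw [taylor_tail_eq_tailRatio_mul (by positivity), ← tailRatio_sqrt_three_sub_one]
    exact mul_le_mul_of_nonneg_right (tailRatio_le_tailRatio_sqrt_three_sub_one hx) hpos.le
  exact ⟨hle, hle.trans_lt (mul_lt_mul_of_pos_right two_mul_sqrt_three_sub_one_mul_exp_lt hpos)⟩
end

section
/- For all x ≥ 0, (1 + x + x²/2 + x³/6) e^{-x} ≤ 4 e^{-√(3/2)} (1 + x/2) e^{-x/2}, and hence (1 + x + x²/2 + x³/6) e^{-x} < 1.176 (1 + x/2) e^{-x/2}. -/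
open Real Finset Nat Set

/-!
Put `s = √(3/2)`. After multiplying by `eˣ`, the first inequality reads
`1 + x + x²/2 + x³/6 ≤ 4 (1 + x/2) e^(x/2 - s)`. The Taylor polynomial of `exp` of odd degree
is a lower bound on all of `ℝ`, so it suffices to prove this with `e^u` replaced by its quintic
Taylor polynomial at `u = x/2 - s`. The difference of the two sides is then a polynomial with a
double root at `x = 2s` (where both sides equal `4 + 4s`, so the constant `4e^(-s)` is sharp),
and the cofactor of `(x - 2s)²` is nonnegative for `x ≥ 0` because `s ≤ 5/4`.
The second inequality is the numerical bound `4e^(-s) ≈ 1.17535 < 1.176`.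
-/

lemma apply_zero_le_of_hasDerivAt_nonpos_nonneg {f f' : ℝ → ℝ} (hf : ∀ t, HasDerivAt f (f' t) t)
    (hneg : ∀ t ≤ 0, f' t ≤ 0) (hpos : ∀ t, 0 ≤ t → 0 ≤ f' t) (x : ℝ) : f 0 ≤ f x := by
  have hcont : Continuous f := continuous_iff_continuousAt.2 fun t ↦ (hf t).continuousAt
  rcases le_total 0 x with hx | hx
  · refine monotoneOn_of_hasDerivWithinAt_nonneg (convex_Ici 0) hcont.continuousOn
      (fun t _ ↦ (hf t).hasDerivWithinAt) (fun t ht ↦ hpos t ?_) self_mem_Ici hx hx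
    rw [interior_Ici] at ht
    exact ht.le
  · refine antitoneOn_of_hasDerivWithinAt_nonpos (convex_Iic 0) hcont.continuousOn
      (fun t _ ↦ (hf t).hasDerivWithinAt) (fun t ht ↦ hneg t ?_) hx self_mem_Iic hx
    rw [interior_Iic] at ht
    exact ht.le

lemma hasDerivAt_sum_range_pow_div_factorial (n : ℕ) (x : ℝ) :
    HasDerivAt (fun t ↦ ∑ i ∈ range (n + 1), t ^ i / (i ! : ℝ))
      (∑ i ∈ range n, x ^ i / (i ! : ℝ)) x := by
  simp_rw [sum_range_succ' _ n, pow_zero, factorial_zero, cast_one, div_one]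
  refine (HasDerivAt.fun_sum (A := fun i t ↦ t ^ (i + 1) / ((i + 1)! : ℝ)) fun i _ ↦ ?_).add_const _
  refine ((hasDerivAt_pow (i + 1) x).div_const ((i + 1)! : ℝ)).congr_deriv ?_
  rw [factorial_succ]
  push_cast
  field_simp

lemma sum_range_two_mul_le_exp (n : ℕ) (x : ℝ) :
    ∑ i ∈ range (2 * n), x ^ i / (i ! : ℝ) ≤ exp x := by
  induction n generalizing x with
  | zero => simpa using (exp_pos x).le
  | succ n ih =>
    set R : ℕ → ℝ → ℝ := fun m t ↦ exp t - ∑ i ∈ range m, t ^ i / (i ! : ℝ)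
    have hR : ∀ m t, HasDerivAt (R (m + 1)) (R m t) t := fun m t ↦
      (hasDerivAt_exp t).sub (hasDerivAt_sum_range_pow_div_factorial m t)
    have hR0 : ∀ m, R (m + 1) 0 = 0 := fun m ↦ by simp [R, sum_range_succ']
    have hodd : Monotone (R (2 * n + 1)) :=
      monotone_of_hasDerivAt_nonneg (hR _) fun t ↦ sub_nonneg.2 (ih t)
    have := apply_zero_le_of_hasDerivAt_nonpos_nonneg (hR (2 * n + 1))
      (fun t ht ↦ hR0 (2 * n) ▸ hodd ht) (fun t ht ↦ hR0 (2 * n) ▸ hodd ht) x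
    rw [hR0] at this
    exact sub_nonneg.1 this

lemma cubic_le_four_mul_quintic (x s : ℝ) (hx : 0 ≤ x) (hs : s ^ 2 = 3 / 2) :
    1 + x + x ^ 2 / 2 + x ^ 3 / 6 ≤ 4 * (1 + x / 2) * (1 + (x / 2 - s) + (x / 2 - s) ^ 2 / 2
      + (x / 2 - s) ^ 3 / 6 + (x / 2 - s) ^ 4 / 24 + (x / 2 - s) ^ 5 / 120) := by
  set Q := 1 / 192 + 101 / 1920 * x + 53 / 1920 * x ^ 2 + 3 / 1280 * x ^ 3 + 1 / 1920 * x ^ 4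
    + (5 / 2 - 2 * s) * (203 / 480 + 21 / 320 * x + 13 / 960 * x ^ 2 + 1 / 640 * x ^ 3)
  have hQ : 0 ≤ Q :=
    add_nonneg (by positivity) (mul_nonneg (by nlinarith) (by positivity))
  have hfactor : 4 * (1 + x / 2) * (1 + (x / 2 - s) + (x / 2 - s) ^ 2 / 2
      + (x / 2 - s) ^ 3 / 6 + (x / 2 - s) ^ 4 / 24 + (x / 2 - s) ^ 5 / 120)
      - (1 + x + x ^ 2 / 2 + x ^ 3 / 6) = (x - 2 * s) ^ 2 * Q := by
    linear_combination (4 * (-1 / 2 + 2 / 3 * s + 1 / 24 * s ^ 2 - 1 / 120 * s ^ 3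
      - 1 / 2 * x - 1 / 24 * x * s + 1 / 24 * x * s ^ 2 - 1 / 240 * x * s ^ 3
      + 1 / 96 * x ^ 2 - 17 / 480 * x ^ 2 * s + 1 / 96 * x ^ 2 * s ^ 2
      + 1 / 120 * x ^ 3 - 7 / 960 * x ^ 3 * s + 1 / 640 * x ^ 4)) * hs
  linarith [mul_nonneg (sq_nonneg (x - 2 * s)) hQ]

lemma four_mul_exp_neg_sqrt_three_halves_lt : 4 * exp (-√(3 / 2)) < 1.176 := by
  have hs : (1.2247 : ℝ) ≤ √(3 / 2) := le_sqrt_of_sq_le (by norm_num)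
  have hexp : (500 / 147 : ℝ) < exp √(3 / 2) := by
    have := sum_le_exp_of_nonneg (x := 1.2247) (by norm_num) 8
    norm_num [sum_range_succ, factorial] at this
    linarith [exp_le_exp.2 hs]
  rw [exp_neg, ← div_eq_mul_inv, div_lt_iff₀ (exp_pos _)]
  linarith

/-- For all `x ≥ 0`,
`(1 + x + x²/2 + x³/6)e^{-x} ≤ 4 e^{-√(3/2)}(1 + x/2)e^{-x/2}`, and hence
`(1 + x + x²/2 + x³/6)e^{-x} < 1.176 (1 + x/2)e^{-x/2}`. -/
theorem taylor_tail_third_order (x : ℝ) (hx : 0 ≤ x) :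
    (1 + x + x ^ 2 / 2 + x ^ 3 / 6) * Real.exp (-x)
        ≤ 4 * Real.exp (-Real.sqrt (3 / 2)) * ((1 + x / 2) * Real.exp (-x / 2)) ∧
    (1 + x + x ^ 2 / 2 + x ^ 3 / 6) * Real.exp (-x)
        < 1.176 * ((1 + x / 2) * Real.exp (-x / 2)) := by
  set s := √(3 / 2)
  have hquintic (u : ℝ) :
      1 + u + u ^ 2 / 2 + u ^ 3 / 6 + u ^ 4 / 24 + u ^ 5 / 120 ≤ exp u := by
    have := sum_range_two_mul_le_exp 3 u
    norm_num [sum_range_succ, factorial] at this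
    linarith
  have hpoly : 1 + x + x ^ 2 / 2 + x ^ 3 / 6 ≤ 4 * (1 + x / 2) * exp (x / 2 - s) :=
    (cubic_le_four_mul_quintic x s hx (sq_sqrt (by norm_num))).trans
      (mul_le_mul_of_nonneg_left (hquintic _) (by positivity))
  have hexp : exp (x / 2 - s) * exp (-x) = exp (-s) * exp (-x / 2) := by
    rw [← exp_add, ← exp_add]
    ring_nf
  have hsharp : (1 + x + x ^ 2 / 2 + x ^ 3 / 6) * exp (-x)
      ≤ 4 * exp (-s) * ((1 + x / 2) * exp (-x / 2)) :=
    calc _ ≤ 4 * (1 + x / 2) * exp (x / 2 - s) * exp (-x) :=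
          mul_le_mul_of_nonneg_right hpoly (exp_nonneg _)
      _ = _ := by linear_combination 4 * (1 + x / 2) * hexp
  exact ⟨hsharp, hsharp.trans_lt <|
    mul_lt_mul_of_pos_right four_mul_exp_neg_sqrt_three_halves_lt (by positivity)⟩
end
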